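/- arXiv:2305.03992 — 3 statements merged into one kernel-verified Lean document; each statement's English description precedes it below -/
import Mathlib

section
/- In ℝ³ with coordinates (t,v,g), define vector fields A₀(t,v,g) = (1, J(v,g), g-1) and A₁(t,v,g) = (0,0,1), where J(v,g) = -g_L v + g(V_E - v). Then the Lie bracket [A₀, A₁] equals (0, -(V_E - v), -1) up to sign, and for every point with 0 < v < V_E, the three vectors A₀, A₁, [A₀,A₁] span ℝ³. -/
theorem hasLineDerivAt_of_add_smul_eq {𝕜 E F : Type*} [NontriviallyNormedField 𝕜]
    [AddCommGroup E] [Module 𝕜 E] [NormedAddCommGroup F] [NormedSpace 𝕜 F]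
    {f : E → F} {x v : E} {u : F} (hf : ∀ s : 𝕜, f (x + s • v) = f x + s • u) :
    HasLineDerivAt 𝕜 f u x v := by
  have h : HasDerivAt (fun s : 𝕜 => f x + s • u) u 0 := by
    simpa using ((hasDerivAt_id (0 : 𝕜)).smul_const u).const_add (f x)
  exact h.congr_of_eventuallyEq (Filter.Eventually.of_forall hf)

theorem span_triangular_eq_top {a b c d : ℝ} (hc : c ≠ 0) :
    Submodule.span ℝ {((1 : ℝ), a, b), ((0 : ℝ), (0 : ℝ), (1 : ℝ)), ((0 : ℝ), c, d)} = ⊤ := by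
  refine eq_top_iff.2 fun ⟨p, q, r⟩ _ => ?_
  have hdecomp : ((p, q, r) : ℝ × ℝ × ℝ) =
      p • ((1 : ℝ), a, b) + ((q - p * a) / c) • ((0 : ℝ), c, d)
        + (r - p * b - (q - p * a) / c * d) • ((0 : ℝ), (0 : ℝ), (1 : ℝ)) := by
    simp only [Prod.smul_mk, Prod.mk_add_mk, Prod.ext_iff, smul_eq_mul]
    refine ⟨by ring, by field_simp; ring, by ring⟩
  rw [hdecomp]
  refine add_mem (add_mem (Submodule.smul_mem _ _ (Submodule.subset_span ?_))
    (Submodule.smul_mem _ _ (Submodule.subset_span ?_)))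
    (Submodule.smul_mem _ _ (Submodule.subset_span ?_)) <;> simp

theorem stmt9_general (gL VE : ℝ)
    (J : ℝ → ℝ → ℝ) (hJ : ∀ v g, J v g = -gL * v + g * (VE - v))
    (A₀ A₁ : ℝ × ℝ × ℝ → ℝ × ℝ × ℝ)
    (hA₀ : ∀ x : ℝ × ℝ × ℝ, A₀ x = (1, J x.2.1 x.2.2, x.2.2 - 1))
    (hA₁ : ∀ x : ℝ × ℝ × ℝ, A₁ x = (0, 0, 1))
    (bracket : ℝ × ℝ × ℝ → ℝ × ℝ × ℝ)
    (hbr : ∀ x, bracket x = fderiv ℝ A₀ x (A₁ x) - fderiv ℝ A₁ x (A₀ x)) :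
    ∀ x : ℝ × ℝ × ℝ, 0 < x.2.1 → x.2.1 < VE →
      (bracket x = (0, VE - x.2.1, 1) ∨ bracket x = (0, -(VE - x.2.1), -1)) ∧
      Submodule.span ℝ {A₀ x, A₁ x, bracket x} = ⊤ := by
  have hA₀_eq : A₀ = fun y => ((1 : ℝ), -gL * y.2.1 + y.2.2 * (VE - y.2.1), y.2.2 - 1) :=
    funext fun y => by rw [hA₀, hJ]
  have hA₁_eq : A₁ = fun _ => ((0 : ℝ), (0 : ℝ), (1 : ℝ)) := funext hA₁
  intro x _ hvVE
  -- `A₀` is affine in `g`, so its derivative along `A₁ = ∂_g` is the coefficient of `g`.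
  have hline : HasLineDerivAt ℝ A₀ (0, VE - x.2.1, 1) x (0, 0, 1) :=
    hasLineDerivAt_of_add_smul_eq fun s => by
      rw [hA₀_eq]
      ext <;> simp <;> ring
  have hdiff : DifferentiableAt ℝ A₀ x := by rw [hA₀_eq]; fun_prop
  have hbracket : bracket x = (0, VE - x.2.1, 1) := by
    rw [hbr, hA₁, hA₁_eq, fderiv_fun_const, ← hdiff.lineDeriv_eq_fderiv, hline.lineDeriv]
    simp
  refine ⟨Or.inl hbracket, ?_⟩
  rw [hbracket, hA₀, hA₁]
  exact span_triangular_eq_top (sub_ne_zero.2 hvVE.ne')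

theorem stmt9 (gL VE : ℝ) (hgL : 0 < gL) (hVE : 1 < VE)
    (J : ℝ → ℝ → ℝ) (hJ : ∀ v g, J v g = -gL * v + g * (VE - v))
    (A₀ A₁ : ℝ × ℝ × ℝ → ℝ × ℝ × ℝ)
    (hA₀ : ∀ x : ℝ × ℝ × ℝ, A₀ x = (1, J x.2.1 x.2.2, x.2.2 - 1))
    (hA₁ : ∀ x : ℝ × ℝ × ℝ, A₁ x = (0, 0, 1))
    (bracket : ℝ × ℝ × ℝ → ℝ × ℝ × ℝ)
    (hbr : ∀ x, bracket x = fderiv ℝ A₀ x (A₁ x) - fderiv ℝ A₁ x (A₀ x)) :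
    ∀ x : ℝ × ℝ × ℝ, 0 < x.2.1 → x.2.1 < VE →
      (bracket x = (0, VE - x.2.1, 1) ∨ bracket x = (0, -(VE - x.2.1), -1)) ∧
      Submodule.span ℝ {A₀ x, A₁ x, bracket x} = ⊤ :=
  stmt9_general gL VE J hJ A₀ A₁ hA₀ hA₁ bracket hbr
end

section
/- Let J : [0,1] × [g₁, g₂] → ℝ be continuous with J(v,g) strictly decreasing in v for each fixed g, and suppose J(a, g) > 0 and J(b, g) < 0 for all g ∈ [g₁,g₂], where 0 ≤ a < b ≤ 1. Then J* := min over (v,g) ∈ ([0,a] ∪ [b,1]) × [g₁,g₂] of |J(v,g)| is strictly positive, and moreover any solution of V'(t) = J(V(t), G(t)) with G(t) ∈ [g₁,g₂] and V(0) ∈ [0,1] satisfies V(t) ∈ [a,b] for all t ≥ (b-a)/J* as long as V stays in [0,1] and G stays in [g₁,g₂]. -/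
open Set

theorem stmt14 (J : ℝ → ℝ → ℝ) (a b g₁ g₂ : ℝ)
    (hg : g₁ ≤ g₂) (ha0 : 0 ≤ a) (hab : a < b) (hb1 : b ≤ 1)
    (hcont : ContinuousOn (fun p : ℝ × ℝ => J p.1 p.2) (Set.Icc 0 1 ×ˢ Set.Icc g₁ g₂))
    (hmono : ∀ g ∈ Set.Icc g₁ g₂, StrictAntiOn (fun v => J v g) (Set.Icc 0 1))
    (hpos : ∀ g ∈ Set.Icc g₁ g₂, 0 < J a g)
    (hneg : ∀ g ∈ Set.Icc g₁ g₂, J b g < 0) :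
    ∃ Jstar : ℝ, 0 < Jstar ∧
      (∀ v g, v ∈ Set.Icc 0 a ∪ Set.Icc b 1 → g ∈ Set.Icc g₁ g₂ → Jstar ≤ |J v g|) ∧
      ∀ V G : ℝ → ℝ, Differentiable ℝ V →
        (∀ t ≥ (0:ℝ), deriv V t = J (V t) (G t)) →
        (∀ t ≥ (0:ℝ), V t ∈ Set.Icc (0:ℝ) 1) →
        (∀ t ≥ (0:ℝ), G t ∈ Set.Icc g₁ g₂) →
        ∀ t : ℝ, (b - a) / Jstar ≤ t → V t ∈ Set.Icc a b := by
  have hab' : a ≤ b := hab.le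
  have ha1 : a ≤ 1 := hab'.trans hb1
  have hb0 : 0 ≤ b := ha0.trans hab'
  set K : Set (ℝ × ℝ) := (Icc 0 a ∪ Icc b 1) ×ˢ Icc g₁ g₂ with hKdef
  have hKsub : K ⊆ Icc 0 1 ×ˢ Icc g₁ g₂ := by
    rintro ⟨v, g⟩ ⟨hv, hg'⟩
    exact ⟨hv.elim (fun h => ⟨h.1, h.2.trans ha1⟩) (fun h => ⟨hb0.trans h.1, h.2⟩), hg'⟩
  have hKc : IsCompact K := (isCompact_Icc.union isCompact_Icc).prod isCompact_Icc
  have hKne : K.Nonempty := ⟨(a, g₁), Or.inl ⟨ha0, le_refl a⟩, ⟨le_refl g₁, hg⟩⟩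
  obtain ⟨p₀, hp₀K, hp₀min⟩ :=
    hKc.exists_isMinOn hKne ((hcont.mono hKsub).abs)
  set m := |J p₀.1 p₀.2| with hmdef
  -- positivity / negativity of J on the two bands
  have hJpos : ∀ v ∈ Icc (0:ℝ) a, ∀ g ∈ Icc g₁ g₂, 0 < J v g := by
    intro v hv g hgm
    have h1 : J a g ≤ J v g := by
      rcases eq_or_lt_of_le hv.2 with h | h
      · rw [h]
      · exact le_of_lt ((hmono g hgm) ⟨hv.1, hv.2.trans ha1⟩ ⟨ha0, ha1⟩ h)
    exact lt_of_lt_of_le (hpos g hgm) h1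
  have hJneg : ∀ v ∈ Icc b (1:ℝ), ∀ g ∈ Icc g₁ g₂, J v g < 0 := by
    intro v hv g hgm
    have h1 : J v g ≤ J b g := by
      rcases eq_or_lt_of_le hv.1 with h | h
      · rw [← h]
      · exact le_of_lt ((hmono g hgm) ⟨hb0, hb1⟩ ⟨hb0.trans hv.1, hv.2⟩ h)
    exact lt_of_le_of_lt h1 (hneg g hgm)
  have hm0 : 0 < m := by
    rcases hp₀K.1 with h | h
    · exact abs_pos.mpr (ne_of_gt (hJpos _ h _ hp₀K.2))
    · exact abs_pos.mpr (ne_of_lt (hJneg _ h _ hp₀K.2))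
  have hge : ∀ v ∈ Icc (0:ℝ) a, ∀ g ∈ Icc g₁ g₂, m ≤ J v g := by
    intro v hv g hgm
    have := hp₀min (show (v,g) ∈ K from ⟨Or.inl hv, hgm⟩)
    simp only [Set.mem_setOf_eq] at this
    rwa [abs_of_pos (hJpos v hv g hgm)] at this
  have hle : ∀ v ∈ Icc b (1:ℝ), ∀ g ∈ Icc g₁ g₂, J v g ≤ -m := by
    intro v hv g hgm
    have := hp₀min (show (v,g) ∈ K from ⟨Or.inr hv, hgm⟩)
    simp only [Set.mem_setOf_eq] at this
    rw [abs_of_neg (hJneg v hv g hgm)] at this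
    linarith
  have hba : 0 < b - a := by linarith
  refine ⟨(b - a) * m, mul_pos hba hm0, ?_, ?_⟩
  · intro v g hv hgm
    have h1 : m ≤ |J v g| := by
      have := hp₀min (show (v,g) ∈ K from ⟨hv, hgm⟩)
      simpa using this
    nlinarith [abs_nonneg (J v g)]
  · intro V G hVdiff hderiv hVrange hGrange t ht
    have hT : (b - a) / ((b - a) * m) = 1 / m := by
      rw [div_mul_eq_div_div, div_self (ne_of_gt hba)]
    rw [hT] at ht
    have hcV : Continuous V := hVdiff.continuous
    have hd1 : ∀ s, 0 ≤ s → V s ≤ a → m ≤ deriv V s := by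
      intro s hs hsa
      rw [hderiv s hs]
      exact hge _ ⟨(hVrange s hs).1, hsa⟩ _ (hGrange s hs)
    have hd2 : ∀ s, 0 ≤ s → b ≤ V s → deriv V s ≤ -m := by
      intro s hs hsb
      rw [hderiv s hs]
      exact hle _ ⟨hsb, (hVrange s hs).2⟩ _ (hGrange s hs)
    have hTpos : 0 < 1 / m := by positivity
    -- Entry: the solution visits [a, b] before time 1/m
    have entry : ∃ s, 0 ≤ s ∧ s ≤ 1 / m ∧ V s ∈ Icc a b := by
      by_contra hcon
      push_neg at hcon
      have h0 : V 0 ∈ Icc (0:ℝ) 1 := hVrange 0 le_rfl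
      rcases lt_or_ge (V 0) a with hV0 | hV0
      · -- V stays below a on [0, 1/m]
        have hall : ∀ s ∈ Icc (0:ℝ) (1 / m), V s < a := by
          intro s hs
          by_contra hge'
          push_neg at hge'
          have : a ∈ Icc (V 0) (V s) := ⟨hV0.le, hge'⟩
          obtain ⟨r, hr, hVr⟩ := intermediate_value_Icc hs.1 hcV.continuousOn this
          exact hcon r hr.1 (hr.2.trans hs.2) (by rw [hVr]; exact ⟨le_rfl, hab'⟩)
        have hmono' : MonotoneOn (fun s => V s - m * s) (Icc 0 (1 / m)) := by
          apply monotoneOn_of_deriv_nonneg (convex_Icc _ _)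
          · exact (hcV.sub (continuous_const.mul continuous_id)).continuousOn
          · exact fun x _ => ((hVdiff x).sub ((differentiable_id.const_mul m) x)).differentiableWithinAt
          · intro x hx
            rw [interior_Icc] at hx
            have hd : deriv (fun s => V s - m * s) x = deriv V x - m := by
              have h1 : HasDerivAt (fun s => V s - m * s) (deriv V x - m * 1) x :=
                (hVdiff x).hasDerivAt.sub ((hasDerivAt_id x).const_mul m)
              rw [h1.deriv]; ring
            rw [hd, sub_nonneg]
            exact hd1 x hx.1.le (hall x ⟨hx.1.le, hx.2.le⟩).le
        have := hmono' ⟨le_rfl, hTpos.le⟩ ⟨hTpos.le, le_rfl⟩ hTpos.le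
        simp only [mul_zero, sub_zero, mul_one_div, div_self (ne_of_gt hm0)] at this
        have hend := hall (1 / m) ⟨hTpos.le, le_rfl⟩
        linarith [h0.1]
      · have hV0' : b < V 0 := by
          rcases lt_or_ge b (V 0) with h | h
          · exact h
          · exact absurd ⟨hV0, h⟩ (hcon 0 le_rfl hTpos.le)
        have hall : ∀ s ∈ Icc (0:ℝ) (1 / m), b < V s := by
          intro s hs
          by_contra hge'
          push_neg at hge'
          have : b ∈ Icc (V s) (V 0) := ⟨hge', hV0'.le⟩
          obtain ⟨r, hr, hVr⟩ := intermediate_value_Icc' hs.1 hcV.continuousOn this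
          exact hcon r hr.1 (hr.2.trans hs.2) (by rw [hVr]; exact ⟨hab', le_rfl⟩)
        have hmono' : MonotoneOn (fun s => -V s - m * s) (Icc 0 (1 / m)) := by
          apply monotoneOn_of_deriv_nonneg (convex_Icc _ _)
          · exact ((hcV.neg).sub (continuous_const.mul continuous_id)).continuousOn
          · exact fun x _ =>
              (((hVdiff x).neg).sub ((differentiable_id.const_mul m) x)).differentiableWithinAt
          · intro x hx
            rw [interior_Icc] at hx
            have hd : deriv (fun s => -V s - m * s) x = -deriv V x - m := by
              have h1 : HasDerivAt (fun s => -V s - m * s) (-deriv V x - m * 1) x :=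
                ((hVdiff x).hasDerivAt.neg).sub ((hasDerivAt_id x).const_mul m)
              rw [h1.deriv]; ring
            rw [hd, sub_nonneg]
            have := hd2 x hx.1.le (hall x ⟨hx.1.le, hx.2.le⟩).le
            linarith
        have := hmono' ⟨le_rfl, hTpos.le⟩ ⟨hTpos.le, le_rfl⟩ hTpos.le
        simp only [mul_zero, sub_zero, mul_one_div, div_self (ne_of_gt hm0)] at this
        have hend := hall (1 / m) ⟨hTpos.le, le_rfl⟩
        linarith [h0.2]
    -- Invariance: once in [a,b], the solution stays in [a,b]
    have invar : ∀ s, 0 ≤ s → V s ∈ Icc a b → ∀ r, s ≤ r → V r ∈ Icc a b := by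
      intro s hs hVs r hsr
      constructor
      · -- lower bound
        by_contra hcon
        push_neg at hcon
        set S : Set ℝ := Icc s r ∩ V ⁻¹' (Ici a) with hSdef
        have hSne : S.Nonempty := ⟨s, ⟨le_rfl, hsr⟩, hVs.1⟩
        have hSbdd : BddAbove S := ⟨r, fun x hx => hx.1.2⟩
        have hScl : IsClosed S := (isClosed_Icc.inter (isClosed_Ici.preimage hcV))
        set u := sSup S with hudef
        have huS : u ∈ S := hScl.csSup_mem hSne hSbdd
        have hur : u ≤ r := huS.1.2
        have hune : u ≠ r := fun h => absurd (show _ from h ▸ huS.2) (not_le.mpr hcon)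
        have hult : u < r := lt_of_le_of_ne hur hune
        have hbeyond : ∀ x ∈ Ioo u r, V x < a := by
          intro x hx
          by_contra hge'
          push_neg at hge'
          exact absurd (le_csSup hSbdd ⟨⟨huS.1.1.trans hx.1.le, hx.2.le⟩, hge'⟩) (not_le.mpr hx.1)
        have hmono' : MonotoneOn V (Icc u r) := by
          apply monotoneOn_of_deriv_nonneg (convex_Icc _ _) hcV.continuousOn
          · exact fun x _ => (hVdiff x).differentiableWithinAt
          · intro x hx
            rw [interior_Icc] at hx
            have hx0 : 0 ≤ x := hs.trans (huS.1.1.trans hx.1.le)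
            exact le_trans hm0.le (hd1 x hx0 (hbeyond x hx).le)
        have := hmono' ⟨le_rfl, hur⟩ ⟨hur, le_rfl⟩ hur
        have h2 : a ≤ V u := huS.2
        linarith
      · -- upper bound
        by_contra hcon
        push_neg at hcon
        set S : Set ℝ := Icc s r ∩ V ⁻¹' (Iic b) with hSdef
        have hSne : S.Nonempty := ⟨s, ⟨le_rfl, hsr⟩, hVs.2⟩
        have hSbdd : BddAbove S := ⟨r, fun x hx => hx.1.2⟩
        have hScl : IsClosed S := (isClosed_Icc.inter (isClosed_Iic.preimage hcV))
        set u := sSup S with hudef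
        have huS : u ∈ S := hScl.csSup_mem hSne hSbdd
        have hur : u ≤ r := huS.1.2
        have hune : u ≠ r := fun h => absurd (show _ from h ▸ huS.2) (not_le.mpr hcon)
        have hult : u < r := lt_of_le_of_ne hur hune
        have hbeyond : ∀ x ∈ Ioo u r, b < V x := by
          intro x hx
          by_contra hge'
          push_neg at hge'
          exact absurd (le_csSup hSbdd ⟨⟨huS.1.1.trans hx.1.le, hx.2.le⟩, hge'⟩) (not_le.mpr hx.1)
        have hanti : AntitoneOn V (Icc u r) := by
          apply antitoneOn_of_deriv_nonpos (convex_Icc _ _) hcV.continuousOn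
          · exact fun x _ => (hVdiff x).differentiableWithinAt
          · intro x hx
            rw [interior_Icc] at hx
            have hx0 : 0 ≤ x := hs.trans (huS.1.1.trans hx.1.le)
            exact le_trans (hd2 x hx0 (hbeyond x hx).le) (by linarith)
        have := hanti ⟨le_rfl, hur⟩ ⟨hur, le_rfl⟩ hur
        have h2 : V u ≤ b := huS.2
        linarith
    obtain ⟨s, hs0, hsT, hVs⟩ := entry
    exact invar s hs0 hVs t (hsT.trans ht)
end

section
/- Let P be a Markov operator with adjoint P* acting on probability measures, W a Lyapunov function with PW ≤ α₁W + α₂ (α₁ ∈ (0,1), α₂ > 0), and suppose the minorization condition P*δ_x ≥ η ν holds uniformly for x in C(R) = {W ≤ R} for some R > 2α₂/(1-α₁), η > 0 and probability measure ν. If π₁ and π₂ are both stationary distributions of P with finite W-moment, then π₁ = π₂. -/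
/-!
The positive and negative parts `π₁ - π₂` and `π₂ - π₁` of the difference of two stationary
measures are again invariant: `π₁ - π₂` is the least measure `ρ` with `π₁ ≤ ρ + π₂`, and
stationarity shows that `κ ∘ₘ (π₁ - π₂)`, which has the same mass, is such a `ρ`. They are
mutually singular, so minorization forbids both of them to charge the small set `{W ≤ R}`, since
both would then dominate a multiple of `ν`. An invariant measure that does not charge `{W ≤ R}`
vanishes, because the drift condition gives `(1 - α₁) ∫ W ≤ α₂ · mass` while `∫ W ≥ R · mass`.
Since the two parts have the same mass, both vanish.
-/

open MeasureTheory ProbabilityTheory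
open scoped ENNReal

namespace MeasureTheory.Measure

variable {X : Type*} [MeasurableSpace X]

lemma sub_apply_univ_comm {p q : Measure X} [IsFiniteMeasure p] [IsFiniteMeasure q]
    (h : p Set.univ = q Set.univ) : (p - q) Set.univ = (q - p) Set.univ := by
  have hsigned := congrArg (fun s : SignedMeasure X ↦ s Set.univ)
    (sub_toSignedMeasure_eq_toSignedMeasure_sub (μ := p) (ν := q))
  simp only [FunLike.coe_sub, Pi.sub_apply,
    toSignedMeasure_apply_measurable MeasurableSet.univ] at hsigned
  rw [measureReal_def, measureReal_def, h, sub_self, eq_comm, sub_eq_zero] at hsigned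
  exact (ENNReal.toReal_eq_toReal_iff' (measure_ne_top _ _) (measure_ne_top _ _)).1 hsigned

lemma eq_of_sub_eq_zero {p q : Measure X} [IsFiniteMeasure p] [IsFiniteMeasure q]
    (huniv : p Set.univ = q Set.univ) (h : p - q = 0) : p = q := by
  have h' : q - p = 0 := measure_univ_eq_zero.1 <| by
    rw [← sub_apply_univ_comm huniv, h, coe_zero, Pi.zero_apply]
  refine le_antisymm ?_ ?_
  · simpa using sub_le_iff_le_add.1 h.le
  · simpa using sub_le_iff_le_add.1 h'.le

variable {Y : Type*} [MeasurableSpace Y] {κ : Kernel X Y}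

lemma comp_mono {μ μ' : Measure X} (h : μ ≤ μ') : κ ∘ₘ μ ≤ κ ∘ₘ μ' := by
  rw [le_iff]
  intro s hs
  simp only [bind_apply hs κ.aemeasurable]
  exact lintegral_mono' h le_rfl

lemma smul_le_comp_of_forall_smul_le {C : Set X} (hC : MeasurableSet C) {c : ℝ≥0∞}
    {ν : Measure Y} (h : ∀ x ∈ C, c • ν ≤ κ x) (μ : Measure X) :
    (c * μ C) • ν ≤ κ ∘ₘ μ := by
  rw [le_iff]
  intro s hs
  rw [bind_apply hs κ.aemeasurable, smul_apply, smul_eq_mul, mul_right_comm,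
    ← setLIntegral_const]
  calc ∫⁻ _ in C, c * ν s ∂μ ≤ ∫⁻ x in C, κ x s ∂μ :=
        setLIntegral_mono' hC fun x hx ↦ by simpa using le_iff'.1 (h x hx) s
    _ ≤ ∫⁻ x, κ x s ∂μ := setLIntegral_le_lintegral _ _

lemma integral_comp {E : Type*} [NormedAddCommGroup E] [NormedSpace ℝ E] {μ : Measure X}
    {f : Y → E} (hf : Integrable f (κ ∘ₘ μ)) :
    ∫ y, f y ∂(κ ∘ₘ μ) = ∫ x, ∫ y, f y ∂κ x ∂μ := by
  rw [comp_eq_comp_const_apply] at hf ⊢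
  rw [Kernel.integral_comp hf]
  simp

end MeasureTheory.Measure

namespace ProbabilityTheory.Kernel

variable {X : Type*} [MeasurableSpace X] {κ : Kernel X X}

lemma Invariant.sub [IsMarkovKernel κ] {p q : Measure X} [IsFiniteMeasure p] [IsFiniteMeasure q]
    (hp : Invariant κ p) (hq : Invariant κ q) : Invariant κ (p - q) := by
  have hle : p - q ≤ κ ∘ₘ (p - q) := Measure.sub_le_of_le_add <| by
    calc p = κ ∘ₘ p := hp.symm
      _ ≤ κ ∘ₘ (p - q + q) := Measure.comp_mono (Measure.sub_le_iff_le_add.1 le_rfl)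
      _ = κ ∘ₘ (p - q) + q := by rw [Measure.comp_add, hq.def]
  exact (Measure.eq_of_le_of_measure_univ_eq hle Measure.comp_apply_univ.symm).symm

lemma Invariant.measure_eq_zero_or_of_mutuallySingular {C : Set X} (hC : MeasurableSet C)
    {c : ℝ≥0∞} (hc : c ≠ 0) {ν : Measure X} (hν : ν ≠ 0) (h : ∀ x ∈ C, c • ν ≤ κ x)
    {μ μ' : Measure X} (hμ : Invariant κ μ) (hμ' : Invariant κ μ') (hμμ' : μ ⟂ₘ μ') :
    μ C = 0 ∨ μ' C = 0 := by
  by_contra! hpos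
  have hsing := hμμ'.mono (hμ.def ▸ Measure.smul_le_comp_of_forall_smul_le hC h μ)
    (hμ'.def ▸ Measure.smul_le_comp_of_forall_smul_le hC h μ')
  exact hν <| (Measure.MutuallySingular.self_iff ν).1 <| hsing.mono_ac
    (Measure.absolutelyContinuous_smul (mul_ne_zero hc hpos.1))
    (Measure.absolutelyContinuous_smul (mul_ne_zero hc hpos.2))

lemma Invariant.eq_zero_of_measure_sublevel_eq_zero {μ : Measure X} [IsFiniteMeasure μ]
    (hμ : Invariant κ μ) {W : X → ℝ} (hW : Integrable W μ) (hWnn : ∀ x, 0 ≤ W x)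
    {α₁ α₂ R : ℝ} (hdrift : ∀ x, ∫ y, W y ∂κ x ≤ α₁ * W x + α₂) (hα₁ : α₁ ≤ 1)
    (hR : α₂ < (1 - α₁) * R) (hC : μ {x | W x ≤ R} = 0) : μ = 0 := by
  have hWcomp : Integrable W (κ ∘ₘ μ) := by rwa [hμ.def]
  have hupper : ∫ x, W x ∂μ ≤ α₁ * ∫ x, W x ∂μ + α₂ * μ.real Set.univ :=
    calc ∫ x, W x ∂μ = ∫ x, ∫ y, W y ∂κ x ∂μ := by
          rw [← Measure.integral_comp hWcomp, hμ.def]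
      _ ≤ ∫ x, (α₁ * W x + α₂) ∂μ :=
          integral_mono_of_nonneg (ae_of_all _ fun _ ↦ integral_nonneg hWnn)
            ((hW.const_mul α₁).add (integrable_const α₂)) (ae_of_all _ hdrift)
      _ = α₁ * ∫ x, W x ∂μ + α₂ * μ.real Set.univ := by
          rw [integral_add (hW.const_mul α₁) (integrable_const α₂), integral_const_mul,
            MeasureTheory.integral_const, smul_eq_mul, mul_comm α₂]
  have hlower : R * μ.real Set.univ ≤ ∫ x, W x ∂μ := by
    have hRW : ∀ᵐ x ∂μ, R ≤ W x := by
      rw [ae_iff]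
      exact measure_mono_null (fun x hx ↦ le_of_lt (not_le.1 hx)) hC
    calc R * μ.real Set.univ = ∫ _, R ∂μ := by
          rw [MeasureTheory.integral_const, smul_eq_mul, mul_comm]
      _ ≤ ∫ x, W x ∂μ := integral_mono_ae (integrable_const R) hW hRW
  have hmass : μ.real Set.univ = 0 := by
    nlinarith [measureReal_nonneg (μ := μ) (s := Set.univ)]
  exact Measure.measure_univ_eq_zero.1 <| (measureReal_eq_zero_iff).1 hmass

end ProbabilityTheory.Kernel

open ProbabilityTheory.Kernel in
theorem stmt17 {X : Type*} [MeasurableSpace X]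
    (κ : Kernel X X) [IsMarkovKernel κ]
    (W : X → ℝ) (hWmeas : Measurable W) (hWnn : ∀ x, 0 ≤ W x)
    (α₁ α₂ : ℝ) (hα₁ : α₁ ∈ Set.Ioo (0:ℝ) 1) (hα₂ : 0 < α₂)
    (hdrift : ∀ x, ∫ y, W y ∂(κ x) ≤ α₁ * W x + α₂)
    (R η : ℝ) (hR : 2 * α₂ / (1 - α₁) < R) (hη : 0 < η)
    (ν : Measure X) [IsProbabilityMeasure ν]
    (hminor : ∀ x, W x ≤ R → (ENNReal.ofReal η) • ν ≤ κ x)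
    (π₁ π₂ : Measure X) [IsProbabilityMeasure π₁] [IsProbabilityMeasure π₂]
    (hstat₁ : π₁.bind κ = π₁) (hstat₂ : π₂.bind κ = π₂)
    (hmom₁ : Integrable W π₁) (hmom₂ : Integrable W π₂) :
    π₁ = π₂ := by
  have hR' : α₂ < (1 - α₁) * R := by
    rw [div_lt_iff₀ (sub_pos.2 hα₁.2)] at hR
    linarith
  have hvanish {p q : Measure X} [IsFiniteMeasure p] [IsFiniteMeasure q] (hp : Invariant κ p)
      (hq : Invariant κ q) (hW : Integrable W p) (hC : (p - q) {x | W x ≤ R} = 0) : p - q = 0 :=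
    (hp.sub hq).eq_zero_of_measure_sublevel_eq_zero (hW.mono_measure Measure.sub_le) hWnn
      hdrift hα₁.2.le hR' hC
  have huniv : π₁ Set.univ = π₂ Set.univ := by simp
  rcases (Invariant.sub hstat₁ hstat₂).measure_eq_zero_or_of_mutuallySingular
      (hWmeas measurableSet_Iic) (ENNReal.ofReal_pos.2 hη).ne' (IsProbabilityMeasure.ne_zero ν)
      hminor (Invariant.sub hstat₂ hstat₁) Measure.mutually_singular_measure_sub with hC | hC
  · exact Measure.eq_of_sub_eq_zero huniv (hvanish hstat₁ hstat₂ hmom₁ hC)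
  · exact (Measure.eq_of_sub_eq_zero huniv.symm (hvanish hstat₂ hstat₁ hmom₂ hC)).symm
end
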